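/- Let (X,d) be a b-metric space with constant b ≥ 1 and let f_1, …, f_N : X → X be generalized F-contractions with a common F ∈ 𝓕 and common τ ∈ Υ. Then the Hutchinson operator T : H(X) → H(X), T(A) = f_1(A) ∪ … ∪ f_N(A), is a Ciric type generalized F-contraction on H(X). -/

import Mathlib

open Filter Topology Set

/-- A b-metric on `X` with constant `b ≥ 1`. -/
def IsBMetric {X : Type*} (b : ℝ) (d : X → X → ℝ) : Prop :=
  (∀ x y, 0 ≤ d x y) ∧ (∀ x y, d x y = 0 ↔ x = y) ∧
  (∀ x y, d x y = d y x) ∧ (∀ x y z, d x y ≤ b * (d x z + d z y))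

/-- Convergence of a sequence with respect to a b-metric `d`. -/
def BConverges {X : Type*} (d : X → X → ℝ) (x : ℕ → X) (l : X) : Prop :=
  Tendsto (fun n => d (x n) l) atTop (𝓝 0)

/-- Cauchyness of a sequence with respect to a b-metric `d`. -/
def BCauchy {X : Type*} (d : X → X → ℝ) (x : ℕ → X) : Prop :=
  ∀ ε : ℝ, 0 < ε → ∃ N : ℕ, ∀ m ≥ N, ∀ n ≥ N, d (x m) (x n) < ε

/-- Completeness of a b-metric space. -/
def BComplete {X : Type*} (d : X → X → ℝ) : Prop :=
  ∀ x : ℕ → X, BCauchy d x → ∃ l, BConverges d x l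

/-- Sequential compactness of a subset of a b-metric space. -/
def BSeqCompact {X : Type*} (d : X → X → ℝ) (A : Set X) : Prop :=
  ∀ x : ℕ → X, (∀ n, x n ∈ A) →
    ∃ a ∈ A, ∃ φ : ℕ → ℕ, StrictMono φ ∧ BConverges d (x ∘ φ) a

/-- `HX d` is the collection of nonempty compact subsets of `X`. -/
def HX {X : Type*} (d : X → X → ℝ) : Set (Set X) :=
  {A | A.Nonempty ∧ BSeqCompact d A}

/-- Distance from a point to a set: `d(x,B) = inf_{y ∈ B} d(x,y)`. -/
noncomputable def distPtSet {X : Type*} (d : X → X → ℝ) (x : X) (B : Set X) : ℝ :=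
  sInf (d x '' B)

/-- The Pompeiu–Hausdorff distance induced by `d`. -/
noncomputable def hausD {X : Type*} (d : X → X → ℝ) (A B : Set X) : ℝ :=
  max (sSup ((fun a => distPtSet d a B) '' A))
    (sSup ((fun y => distPtSet d y A) '' B))

/-- The class `𝓕` of Wardowski functions: continuous and strictly increasing on `(0,∞)`,
satisfying (F2) and (F3). -/
def MemF (F : ℝ → ℝ) : Prop :=
  ContinuousOn F (Ioi 0) ∧ StrictMonoOn F (Ioi 0) ∧
  (∀ α : ℕ → ℝ, (∀ n, 0 < α n) →
    (Tendsto α atTop (𝓝 0) ↔ Tendsto (fun n => F (α n)) atTop atBot)) ∧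
  (∃ h ∈ Ioo (0:ℝ) 1, Tendsto (fun t : ℝ => t ^ h * F t) (𝓝[>] 0) (𝓝 0))

/-- The class `Υ`: positive on `(0,∞)` with `liminf_{t → s} τ(t) > 0` for every `s ≥ 0`,
the limit being taken within the domain `(0,∞)`. -/
def MemUpsilon (τ : ℝ → ℝ) : Prop :=
  (∀ t : ℝ, 0 < t → 0 < τ t) ∧
  (∀ s : ℝ, 0 ≤ s → 0 < liminf τ (𝓝[Set.Ioi (0:ℝ)] s))

/-- A generalized F-contraction on a b-metric space. -/
def GenFContraction {X : Type*} (d : X → X → ℝ) (f : X → X) (F τ : ℝ → ℝ) : Prop :=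
  ∀ x y, 0 < d (f x) (f y) → τ (d x y) + F (d (f x) (f y)) ≤ F (d x y)


/-! ### Auxiliary machinery -/

/-- `ℓ(s) = liminf_{t→s, t>0} τ(t)`. -/
noncomputable def ellTau (τ : ℝ → ℝ) (s : ℝ) : ℝ := liminf τ (𝓝[Set.Ioi (0:ℝ)] s)

/-- The modified rate function used for the Hutchinson operator. -/
noncomputable def tauP (τ : ℝ → ℝ) (r : ℝ) : ℝ :=
  sInf (ellTau τ '' Set.Ioc 0 (max r 1)) / 2

lemma cobounded_of_pos_liminf {l : Filter ℝ} {u : ℝ → ℝ} (h : 0 < Filter.liminf u l) :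
    Filter.IsCoboundedUnder (· ≥ ·) l u := by
  by_contra hc
  have hb : ¬ BddAbove {a : ℝ | ∀ᶠ x in l, a ≤ u x} := by
    rintro ⟨c, hcb⟩
    exact hc ⟨c, fun a ha => hcb (by exact Filter.eventually_map.1 ha)⟩
  rw [Filter.liminf_eq, csSup_of_not_bddAbove hb, Real.sSup_empty] at h
  exact lt_irrefl 0 h

lemma neBot_nhdsWithin_Ioi {s : ℝ} (hs : 0 ≤ s) : (𝓝[Set.Ioi (0:ℝ)] s).NeBot := by
  rw [← mem_closure_iff_nhdsWithin_neBot, closure_Ioi]; exact hs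

lemma bdd_of_compact {X : Type*} {b : ℝ} (hb : 1 ≤ b) {d : X → X → ℝ} (hd : IsBMetric b d)
    {A : Set X} (hA : BSeqCompact d A) (y : X) : ∃ C, ∀ a ∈ A, d a y ≤ C := by
  by_contra hc
  push_neg at hc
  choose g hg1 hg2 using fun n : ℕ => hc n
  obtain ⟨l, _, φ, hφ, hconv⟩ := hA g hg1
  have hev : ∀ᶠ n in atTop, d (g (φ n)) l < 1 :=
    hconv.eventually (eventually_lt_nhds one_pos)
  obtain ⟨n0, hn0⟩ := eventually_atTop.1 hev
  obtain ⟨m, hm⟩ := exists_nat_gt (b * (1 + d l y))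
  set n := max n0 m with hn
  have h1 : d (g (φ n)) y ≤ b * (d (g (φ n)) l + d l y) := hd.2.2.2 _ _ _
  have h2 : ((n:ℝ)) < d (g (φ n)) y := by
    have := hg2 (φ n)
    have hle : (n:ℝ) ≤ (φ n : ℝ) := by exact_mod_cast hφ.le_apply
    linarith
  have h3 : d (g (φ n)) l < 1 := hn0 n (le_max_left _ _)
  have hb0 : (0:ℝ) ≤ b := le_trans zero_le_one hb
  have h4 : b * (d (g (φ n)) l + d l y) ≤ b * (1 + d l y) := by
    apply mul_le_mul_of_nonneg_left _ hb0
    linarith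
  have h5 : (m:ℝ) ≤ (n:ℝ) := by exact_mod_cast le_max_right n0 m
  linarith

lemma distPtSet_le {X : Type*} {d : X → X → ℝ} (hd0 : ∀ x y, 0 ≤ d x y)
    {B : Set X} {y : X} (hy : y ∈ B) (x : X) : distPtSet d x B ≤ d x y :=
  csInf_le ⟨0, by rintro _ ⟨z, hz, rfl⟩; exact hd0 x z⟩ ⟨y, hy, rfl⟩

lemma inf_ell_pos {τ : ℝ → ℝ} (hτ : MemUpsilon τ) {R : ℝ} (hR : 0 < R) :
    0 < sInf (ellTau τ '' Set.Ioc 0 R) := by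
  have hne : (Set.Ioc (0:ℝ) R).Nonempty := ⟨R, hR, le_refl R⟩
  rcases lt_or_ge 0 (sInf (ellTau τ '' Set.Ioc 0 R)) with h | hc
  · exact h
  · exfalso
    have hex : ∀ k : ℕ, ∃ t, t ∈ Set.Ioi (0:ℝ) ∧ ∃ s, s ∈ Set.Ioc (0:ℝ) R ∧
        |t - s| < 1/(k+1) ∧ τ t < 1/(k+1) := by
      intro k
      have hpos : (0:ℝ) < 1/(k+1) := by positivity
      obtain ⟨_, ⟨s, hs, rfl⟩, hlt⟩ :=
        exists_lt_of_csInf_lt (hne.image _) (lt_of_le_of_lt hc hpos)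
      have hcob : IsCoboundedUnder (· ≥ ·) (𝓝[Set.Ioi (0:ℝ)] s) τ :=
        cobounded_of_pos_liminf (hτ.2 s hs.1.le)
      have hfreq := frequently_lt_of_liminf_lt hcob hlt
      have hev : ∀ᶠ t in 𝓝[Set.Ioi (0:ℝ)] s, t ∈ Set.Ioi (0:ℝ) ∧ |t - s| < 1/(k+1) :=
        eventually_mem_nhdsWithin.and
          (eventually_nhdsWithin_of_eventually_nhds (eventually_abs_sub_lt s hpos))
      obtain ⟨t, ht1, ht2, ht3⟩ := (hfreq.and_eventually hev).exists
      exact ⟨t, ht2, s, hs, ht3, ht1⟩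
    choose t ht s hs htd htau using hex
    obtain ⟨s', hs', φ, hφ, hconv⟩ :=
      (isCompact_Icc (a := (0:ℝ)) (b := R)).tendsto_subseq
        (fun k => Ioc_subset_Icc_self (hs k))
    have hsmall : Tendsto (fun k : ℕ => 1/((k:ℝ)+1)) atTop (𝓝 0) :=
      tendsto_one_div_add_atTop_nhds_zero_nat
    have hdiff : Tendsto (fun k => t (φ k) - s (φ k)) atTop (𝓝 0) := by
      apply squeeze_zero_norm _ hsmall
      intro k
      have h1 : |t (φ k) - s (φ k)| < 1/((φ k:ℝ)+1) := htd (φ k)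
      have h2 : 1/((φ k:ℝ)+1) ≤ 1/((k:ℝ)+1) := by
        apply one_div_le_one_div_of_le (by positivity)
        have : (k:ℝ) ≤ (φ k : ℝ) := by exact_mod_cast hφ.le_apply
        linarith
      simpa using (le_of_lt (lt_of_lt_of_le h1 h2))
    have htt : Tendsto (fun k => t (φ k)) atTop (𝓝 s') := by
      have := hdiff.add hconv
      simpa using this
    have hL : 0 < liminf τ (𝓝[Set.Ioi (0:ℝ)] s') := hτ.2 s' hs'.1
    have h0τ : ∀ᶠ u in 𝓝[Set.Ioi (0:ℝ)] s', 0 ≤ τ u :=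
      eventually_mem_nhdsWithin.mono fun u hu => (hτ.1 u hu).le
    have hev2 : ∀ᶠ u in 𝓝[Set.Ioi (0:ℝ)] s',
        liminf τ (𝓝[Set.Ioi (0:ℝ)] s') / 2 < τ u :=
      eventually_lt_of_lt_liminf (half_lt_self hL) ⟨0, Filter.eventually_map.2 h0τ⟩
    have htw : Tendsto (fun k => t (φ k)) atTop (𝓝[Set.Ioi (0:ℝ)] s') :=
      tendsto_nhdsWithin_of_tendsto_nhds_of_eventually_within _ htt
        (Eventually.of_forall fun k => ht (φ k))
    have hbig := htw.eventually hev2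
    have hsmall2 : ∀ᶠ k : ℕ in atTop,
        τ (t (φ k)) < liminf τ (𝓝[Set.Ioi (0:ℝ)] s') / 2 := by
      have : ∀ᶠ k : ℕ in atTop, 1/((k:ℝ)+1) < liminf τ (𝓝[Set.Ioi (0:ℝ)] s') / 2 :=
        hsmall.eventually (eventually_lt_nhds (half_pos hL))
      filter_upwards [this] with k hk
      have h1 : τ (t (φ k)) < 1/((φ k:ℝ)+1) := htau (φ k)
      have h2 : 1/((φ k:ℝ)+1) ≤ 1/((k:ℝ)+1) := by
        apply one_div_le_one_div_of_le (by positivity)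
        have : (k:ℝ) ≤ (φ k : ℝ) := by exact_mod_cast hφ.le_apply
        linarith
      linarith
    obtain ⟨k, hk1, hk2⟩ := (hbig.and hsmall2).exists
    linarith

lemma ell_bddBelow {τ : ℝ → ℝ} (hτ : MemUpsilon τ) (R : ℝ) :
    BddBelow (ellTau τ '' Set.Ioc 0 R) := by
  refine ⟨0, ?_⟩
  rintro _ ⟨u, hu, rfl⟩
  exact (hτ.2 u hu.1.le).le

lemma tauP_pos {τ : ℝ → ℝ} (hτ : MemUpsilon τ) (r : ℝ) : 0 < tauP τ r :=
  half_pos (inf_ell_pos hτ (lt_of_lt_of_le one_pos (le_max_right r 1)))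

lemma tauP_antitone {τ : ℝ → ℝ} (hτ : MemUpsilon τ) : Antitone (tauP τ) := by
  intro r r' h
  have hsub : Set.Ioc (0:ℝ) (max r 1) ⊆ Set.Ioc 0 (max r' 1) :=
    Set.Ioc_subset_Ioc_right (max_le_max h (le_refl 1))
  have hne : (ellTau τ '' Set.Ioc (0:ℝ) (max r 1)).Nonempty :=
    (Set.nonempty_Ioc.2 (lt_of_lt_of_le one_pos (le_max_right r 1))).image _
  have := csInf_le_csInf (ell_bddBelow hτ (max r' 1)) hne (Set.image_mono hsub)
  unfold tauP
  linarith

lemma tauP_le_half_ell {τ : ℝ → ℝ} (hτ : MemUpsilon τ) {M s : ℝ} (hs : 0 < s)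
    (hsM : s ≤ M) : tauP τ M ≤ ellTau τ s / 2 := by
  have hmem : s ∈ Set.Ioc (0:ℝ) (max M 1) := ⟨hs, le_trans hsM (le_max_left M 1)⟩
  have := csInf_le (ell_bddBelow hτ (max M 1)) ⟨s, hmem, rfl⟩
  unfold tauP
  linarith

lemma tauP_memUpsilon {τ : ℝ → ℝ} (hτ : MemUpsilon τ) : MemUpsilon (tauP τ) := by
  refine ⟨fun t _ => tauP_pos hτ t, fun s hs => ?_⟩
  haveI := neBot_nhdsWithin_Ioi hs
  have hub : ∀ᶠ x in 𝓝[Set.Ioi (0:ℝ)] s, tauP τ x ≤ tauP τ 0 :=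
    eventually_mem_nhdsWithin.mono fun x hx => tauP_antitone hτ (le_of_lt hx)
  have hcob : IsCoboundedUnder (· ≥ ·) (𝓝[Set.Ioi (0:ℝ)] s) (tauP τ) :=
    isCoboundedUnder_ge_of_eventually_le _ hub
  have hev : ∀ᶠ x in 𝓝[Set.Ioi (0:ℝ)] s, tauP τ (s+1) ≤ tauP τ x := by
    have h1 : ∀ᶠ x in 𝓝[Set.Ioi (0:ℝ)] s, x < s + 1 :=
      eventually_nhdsWithin_of_eventually_nhds (eventually_lt_nhds (lt_add_one s))
    exact h1.mono fun x hx => tauP_antitone hτ hx.le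
  exact lt_of_lt_of_le (tauP_pos hτ (s+1)) (le_liminf_of_le hcob hev)

lemma nonexp {X : Type*} {b : ℝ} {d : X → X → ℝ} (hd : IsBMetric b d) {F τ : ℝ → ℝ}
    (hF : MemF F) (hτ : MemUpsilon τ) {g : X → X} (hg : GenFContraction d g F τ) :
    ∀ x y, d (g x) (g y) ≤ d x y := by
  intro x y
  rcases le_or_gt (d (g x) (g y)) 0 with h | h
  · exact le_trans h (hd.1 x y)
  · have hxy : x ≠ y := by
      rintro rfl
      rw [(hd.2.1 (g x) (g x)).2 rfl] at h
      exact lt_irrefl 0 h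
    have hdxy : 0 < d x y :=
      lt_of_le_of_ne (hd.1 x y) fun he => hxy ((hd.2.1 x y).1 he.symm)
    have hc := hg x y h
    have hτp := hτ.1 _ hdxy
    by_contra hlt
    push_neg at hlt
    have := hF.2.1 (mem_Ioi.2 hdxy) (mem_Ioi.2 h) hlt
    linarith

lemma key_hutchinson {X : Type*} {b : ℝ} (hb : 1 ≤ b) {d : X → X → ℝ} (hd : IsBMetric b d)
    {N : ℕ} (hN : 0 < N) {f : Fin N → X → X} {F τ : ℝ → ℝ}
    (hF : MemF F) (hτ : MemUpsilon τ) (hf : ∀ i, GenFContraction d (f i) F τ)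
    {A B : Set X} (hAne : A.Nonempty) (hBne : B.Nonempty) (hAc : BSeqCompact d A)
    {M : ℝ} (hM : hausD d A B ≤ M)
    (hS : 0 < sSup ((fun x => distPtSet d x (⋃ i, f i '' B)) '' (⋃ i, f i '' A))) :
    tauP τ M + F (sSup ((fun x => distPtSet d x (⋃ i, f i '' B)) '' (⋃ i, f i '' A))) ≤ F M := by
  set TA : Set X := ⋃ i, f i '' A with hTA
  set TB : Set X := ⋃ i, f i '' B with hTB
  set S := sSup ((fun x => distPtSet d x TB) '' TA) with hSdef
  obtain ⟨b0, hb0⟩ := hBne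
  obtain ⟨C, hC⟩ := bdd_of_compact hb hd hAc b0
  have hDb : ∀ a ∈ A, distPtSet d a B ≤ M := by
    intro a ha
    have hbdd : BddAbove ((fun a => distPtSet d a B) '' A) := by
      refine ⟨C, ?_⟩
      rintro _ ⟨a', ha', rfl⟩
      exact (distPtSet_le hd.1 hb0 a').trans (hC a' ha')
    have h1 : distPtSet d a B ≤ sSup ((fun a => distPtSet d a B) '' A) :=
      le_csSup hbdd ⟨a, ha, rfl⟩
    exact h1.trans ((le_max_left _ _).trans hM)
  have hTAne : TA.Nonempty := by
    obtain ⟨a, ha⟩ := hAne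
    exact ⟨f ⟨0, hN⟩ a, mem_iUnion.2 ⟨⟨0, hN⟩, ⟨a, ha, rfl⟩⟩⟩
  have hsel : ∀ n : ℕ, ∃ (i : Fin N) (a y : X), a ∈ A ∧ y ∈ B ∧
      S - 1/(n+1) < distPtSet d (f i a) TB ∧ d a y < distPtSet d a B + 1/(n+1) := by
    intro n
    have hpos : (0:ℝ) < 1/(n+1) := by positivity
    obtain ⟨_, ⟨x, hx, rfl⟩, hlt⟩ :=
      exists_lt_of_lt_csSup (hTAne.image _) (by linarith : S - 1/(n+1) < S)
    rw [hTA, mem_iUnion] at hx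
    obtain ⟨i, a, ha, rfl⟩ := hx
    have hIne : (d a '' B).Nonempty := ⟨d a b0, b0, hb0, rfl⟩
    obtain ⟨_, ⟨y, hy, rfl⟩, hylt⟩ := exists_lt_of_csInf_lt hIne
      (by simp only [distPtSet]; linarith : sInf (d a '' B) < distPtSet d a B + 1/(n+1))
    exact ⟨i, a, y, ha, hy, hlt, hylt⟩
  choose ii aa yy haA hyB hsel1 hsel2 using hsel
  set t : ℕ → ℝ := fun n => d (aa n) (yy n) with htdef
  set e : ℕ → ℝ := fun n => d (f (ii n) (aa n)) (f (ii n) (yy n)) with hedef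
  have he_le_t : ∀ n, e n ≤ t n := fun n => nonexp hd hF hτ (hf (ii n)) _ _
  have hSe : ∀ n, S - 1/(n+1) < e n := by
    intro n
    refine lt_of_lt_of_le (hsel1 n) ?_
    have hmem : f (ii n) (yy n) ∈ TB := by
      rw [hTB, mem_iUnion]; exact ⟨ii n, yy n, hyB n, rfl⟩
    exact distPtSet_le hd.1 hmem _
  have htM : ∀ n, t n < M + 1/(n+1) :=
    fun n => lt_of_lt_of_le (hsel2 n) (by linarith [hDb (aa n) (haA n)])
  have htmem : ∀ n, t n ∈ Set.Icc (0:ℝ) (M + 1) := by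
    intro n
    refine ⟨hd.1 _ _, ?_⟩
    have h1 : 1/((n:ℝ)+1) ≤ 1 := by
      rw [div_le_one (by positivity)]
      linarith [Nat.cast_nonneg (α := ℝ) n]
    linarith [htM n]
  obtain ⟨s, hsmem, φ, hφ, hconv⟩ := isCompact_Icc.tendsto_subseq htmem
  have hsmall : Tendsto (fun k : ℕ => 1/((k:ℝ)+1)) atTop (𝓝 0) :=
    tendsto_one_div_add_atTop_nhds_zero_nat
  have hφle : ∀ k : ℕ, 1/((φ k:ℝ)+1) ≤ 1/((k:ℝ)+1) := by
    intro k
    apply one_div_le_one_div_of_le (by positivity)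
    have : (k:ℝ) ≤ (φ k : ℝ) := by exact_mod_cast hφ.le_apply
    linarith
  have hεφ : Tendsto (fun k : ℕ => 1/((φ k:ℝ)+1)) atTop (𝓝 0) := by
    apply squeeze_zero (fun k => by positivity) hφle hsmall
  have hSs : S ≤ s := by
    refine le_of_tendsto_of_tendsto' (f := fun k => S - 1/((φ k:ℝ)+1))
      (by simpa using tendsto_const_nhds.sub hεφ) hconv
      (fun k => ((hSe (φ k)).le.trans (he_le_t (φ k))))
  have hsM : s ≤ M := by
    refine le_of_tendsto_of_tendsto' hconv (g := fun k => M + 1/((φ k:ℝ)+1))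
      (by simpa using tendsto_const_nhds.add hεφ) (fun k => (htM (φ k)).le)
  have hs0 : 0 < s := lt_of_lt_of_le hS hSs
  have hM0 : 0 < M := lt_of_lt_of_le hs0 hsM
  have hℓ : 0 < ellTau τ s := hτ.2 s hs0.le
  have hτ'lt : tauP τ M < ellTau τ s :=
    lt_of_le_of_lt (tauP_le_half_ell hτ hs0 hsM) (half_lt_self hℓ)
  have h0τ : ∀ᶠ u in 𝓝[Set.Ioi (0:ℝ)] s, 0 ≤ τ u :=
    eventually_mem_nhdsWithin.mono fun u hu => (hτ.1 u hu).le
  have hev : ∀ᶠ u in 𝓝[Set.Ioi (0:ℝ)] s, tauP τ M < τ u :=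
    eventually_lt_of_lt_liminf hτ'lt ⟨0, Filter.eventually_map.2 h0τ⟩
  have hepos : ∀ᶠ k : ℕ in atTop, 0 < S - 1/((φ k:ℝ)+1) := by
    have := hεφ.eventually (eventually_lt_nhds hS)
    filter_upwards [this] with k hk; linarith
  have htin : ∀ᶠ k : ℕ in atTop, t (φ k) ∈ Set.Ioi (0:ℝ) := by
    filter_upwards [hepos] with k hk
    have := hSe (φ k)
    have := hφle k
    have := he_le_t (φ k)
    simp only [mem_Ioi]
    linarith
  have htw : Tendsto (fun k => t (φ k)) atTop (𝓝[Set.Ioi (0:ℝ)] s) :=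
    tendsto_nhdsWithin_of_tendsto_nhds_of_eventually_within _ hconv htin
  have hτev : ∀ᶠ k : ℕ in atTop, tauP τ M < τ (t (φ k)) := htw.eventually hev
  have hchain : ∀ᶠ k : ℕ in atTop,
      F (S - 1/((φ k:ℝ)+1)) ≤ F (M + 1/((φ k:ℝ)+1)) - tauP τ M := by
    filter_upwards [hτev, hepos] with k hτk hSk
    have hεp : 0 < 1/((φ k:ℝ)+1) := by positivity
    have hεp2 : 1/((φ k:ℝ)+1) ≤ 1/((k:ℝ)+1) := hφle k
    have he0 : 0 < e (φ k) := by linarith [hSe (φ k)]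
    have ht0' : 0 < t (φ k) := lt_of_lt_of_le he0 (he_le_t (φ k))
    have hcontr := hf (ii (φ k)) (aa (φ k)) (yy (φ k)) he0
    have hm1 : F (S - 1/((φ k:ℝ)+1)) ≤ F (e (φ k)) :=
      (hF.2.1 (mem_Ioi.2 hSk) (mem_Ioi.2 he0) (hSe (φ k))).le
    have hm2 : F (t (φ k)) ≤ F (M + 1/((φ k:ℝ)+1)) :=
      (hF.2.1 (mem_Ioi.2 ht0') (mem_Ioi.2 (by positivity)) (htM (φ k))).le
    have hτk' := hτ.1 _ ht0'
    linarith
  have hFu : Tendsto (fun k => F (S - 1/((φ k:ℝ)+1))) atTop (𝓝 (F S)) := by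
    have hu : Tendsto (fun k => S - 1/((φ k:ℝ)+1)) atTop (𝓝[Set.Ioi (0:ℝ)] S) := by
      apply tendsto_nhdsWithin_of_tendsto_nhds_of_eventually_within _
        (by simpa using tendsto_const_nhds.sub hεφ)
      exact hepos.mono fun k hk => mem_Ioi.2 hk
    exact (hF.1 S (mem_Ioi.2 hS)).tendsto.comp hu
  have hFv : Tendsto (fun k => F (M + 1/((φ k:ℝ)+1))) atTop (𝓝 (F M)) := by
    have hv : Tendsto (fun k => M + 1/((φ k:ℝ)+1)) atTop (𝓝[Set.Ioi (0:ℝ)] M) := by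
      apply tendsto_nhdsWithin_of_tendsto_nhds_of_eventually_within _
        (by simpa using tendsto_const_nhds.add hεφ)
      exact Eventually.of_forall fun k => mem_Ioi.2 (by positivity)
    exact (hF.1 M (mem_Ioi.2 hM0)).tendsto.comp hv
  have hfin := le_of_tendsto_of_tendsto hFu (hFv.sub_const (tauP τ M)) hchain
  linarith

/-- The Hutchinson operator of a finite family of generalized F-contractions is a
Ciric type generalized F-contraction on `H(X)`. -/
theorem hutchinson_ciric_genF {X : Type*} (b : ℝ) (hb : 1 ≤ b)
    (d : X → X → ℝ) (hd : IsBMetric b d)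
    (N : ℕ) (hN : 0 < N) (f : Fin N → X → X) (F τ : ℝ → ℝ)
    (hF : MemF F) (hτ : MemUpsilon τ) (hf : ∀ i, GenFContraction d (f i) F τ)
    (T : Set X → Set X) (hT : ∀ A : Set X, T A = ⋃ i, f i '' A) :
    ∃ F' τ' : ℝ → ℝ, MemF F' ∧ MemUpsilon τ' ∧
      ∀ A ∈ HX d, ∀ B ∈ HX d, 0 < hausD d (T A) (T B) →
        τ' (max (hausD d A B) (max (hausD d A (T A)) (max (hausD d B (T B))
            (max ((hausD d A (T B) + hausD d B (T A)) / (2 * b))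
            (max (hausD d (T (T A)) (T A)) (max (hausD d (T (T A)) B)
              (hausD d (T (T A)) (T B)))))))) +
          F' (hausD d (T A) (T B)) ≤
        F' (max (hausD d A B) (max (hausD d A (T A)) (max (hausD d B (T B))
            (max ((hausD d A (T B) + hausD d B (T A)) / (2 * b))
            (max (hausD d (T (T A)) (T A)) (max (hausD d (T (T A)) B)
              (hausD d (T (T A)) (T B)))))))) := by
  refine ⟨F, tauP τ, hF, tauP_memUpsilon hτ, ?_⟩
  rintro A ⟨hAne, hAc⟩ B ⟨hBne, hBc⟩ hH
  have hDM : hausD d A B ≤ max (hausD d A B) (max (hausD d A (T A)) (max (hausD d B (T B))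
      (max ((hausD d A (T B) + hausD d B (T A)) / (2 * b))
      (max (hausD d (T (T A)) (T A)) (max (hausD d (T (T A)) B)
        (hausD d (T (T A)) (T B))))))) := le_max_left _ _
  rcases le_total (sSup ((fun y => distPtSet d y (T A)) '' (T B)))
      (sSup ((fun a => distPtSet d a (T B)) '' (T A))) with hc | hc
  · have heq : hausD d (T A) (T B) = sSup ((fun a => distPtSet d a (T B)) '' (T A)) := by
      unfold hausD; exact max_eq_left hc
    rw [heq] at hH ⊢
    have hrw : (fun a => distPtSet d a (T B)) '' (T A)
        = (fun x => distPtSet d x (⋃ i, f i '' B)) '' (⋃ i, f i '' A) := by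
      rw [hT A, hT B]
    rw [hrw] at hH ⊢
    exact key_hutchinson hb hd hN hF hτ hf hAne hBne hAc hDM hH
  · have heq : hausD d (T A) (T B) = sSup ((fun y => distPtSet d y (T A)) '' (T B)) := by
      unfold hausD; exact max_eq_right hc
    rw [heq] at hH ⊢
    have hrw : (fun y => distPtSet d y (T A)) '' (T B)
        = (fun x => distPtSet d x (⋃ i, f i '' A)) '' (⋃ i, f i '' B) := by
      rw [hT A, hT B]
    rw [hrw] at hH ⊢
    have hDM' : hausD d B A ≤ max (hausD d A B) (max (hausD d A (T A)) (max (hausD d B (T B))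
        (max ((hausD d A (T B) + hausD d B (T A)) / (2 * b))
        (max (hausD d (T (T A)) (T A)) (max (hausD d (T (T A)) B)
          (hausD d (T (T A)) (T B))))))) := by
      have hcomm : hausD d B A = hausD d A B := by unfold hausD; exact max_comm _ _
      rw [hcomm]; exact hDM
    exact key_hutchinson hb hd hN hF hτ hf hBne hAne hBc hDM' hH
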